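/- Let $G$ be a graph, $F$ a fire set, and suppose each vertex $v$ carries a positive integer weight $w_v$. Construct $G''$ from $G$ by attaching $w_v - 1$ new leaves $L_v$ to each vertex $v$, and let $F'' = \bigcup_{v \in F}(L_v \cup \{v\})$. Then in the path-restricted firefighter game, $b$ firefighters can save total weight at least $k$ in $(G, F)$ if and only if they can save at least $k$ vertices in $(G'', F'')$. -/

import Mathlib

open SimpleGraph Finset
open scoped Classical

namespace FF

variable {V : Type*} [Fintype V] [DecidableEq V]

/-- One step of fire spread: the fire spreads to every undefended neighbour of a burnt vertex. -/
noncomputable def spread (G : SimpleGraph V) (D B : Finset V) : Finset V :=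
  B ∪ Finset.univ.filter (fun v => v ∉ D ∧ ∃ u ∈ B, G.Adj u v)

/-- Cumulative defended set of a classic strategy. -/
noncomputable def cumDef (σ : ℕ → Finset V) (t : ℕ) : Finset V :=
  (Finset.range (t + 1)).biUnion σ

/-- Burnt set at time `t` in the classic game. -/
noncomputable def burnt (G : SimpleGraph V) (F : Finset V) (σ : ℕ → Finset V) : ℕ → Finset V
  | 0 => F
  | t + 1 => spread G (cumDef σ t) (burnt G F σ t)

/-- A classic strategy is valid for `b` firefighters. -/
def ValidClassic (G : SimpleGraph V) (F : Finset V) (b : ℕ) (σ : ℕ → Finset V) : Prop :=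
  ∀ t, (σ t).card ≤ b ∧ ∀ v ∈ σ t, v ∉ burnt G F σ t

/-- Final burnt set (the process stabilizes after `|V|` steps). -/
noncomputable def finalBurnt (G : SimpleGraph V) (F : Finset V) (σ : ℕ → Finset V) : Finset V :=
  burnt G F σ (Fintype.card V)

/-- Maximum number of vertices saved in the classic game. -/
noncomputable def MVS (G : SimpleGraph V) (F : Finset V) (b : ℕ) : ℕ :=
  sSup {k | ∃ σ : ℕ → Finset V, ValidClassic G F b σ ∧
    k = Fintype.card V - (finalBurnt G F σ).card}

/-- Defended set induced by firefighter positions up to time `t`. -/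
noncomputable def posDef {b : ℕ} (p : ℕ → Fin b → V) (t : ℕ) : Finset V :=
  (Finset.range (t + 1)).biUnion (fun τ => Finset.univ.image (p τ))

/-- Burnt set at time `t` in the position-based games. -/
noncomputable def pburnt (G : SimpleGraph V) (F : Finset V) {b : ℕ}
    (p : ℕ → Fin b → V) : ℕ → Finset V
  | 0 => F
  | t + 1 => spread G (posDef p t) (pburnt G F p t)

/-- Validity for the distance-restricted game: firefighters never occupy a burnt
vertex and move graph distance at most `d` each turn. -/
def ValidDR (G : SimpleGraph V) (F : Finset V) (d : ℕ) {b : ℕ} (p : ℕ → Fin b → V) : Prop :=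
  (∀ t i, p t i ∉ pburnt G F p t) ∧ ∀ t i, G.dist (p t i) (p (t + 1) i) ≤ d

/-- Distance-restricted maximum vertices saved. -/
noncomputable def DRMVS (G : SimpleGraph V) (F : Finset V) (b d : ℕ) : ℕ :=
  sSup {k | ∃ p : ℕ → Fin b → V, ValidDR G F d p ∧
    k = Fintype.card V - (pburnt G F p (Fintype.card V)).card}

/-- Validity for the path-restricted game with unlimited distance: firefighters
move along walks of unburnt vertices. -/
def ValidPR (G : SimpleGraph V) (F : Finset V) {b : ℕ} (p : ℕ → Fin b → V) : Prop :=
  (∀ t i, p t i ∉ pburnt G F p t) ∧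
    ∀ t i, ∃ w : G.Walk (p t i) (p (t + 1) i),
      ∀ v ∈ w.support, v ∉ pburnt G F p (t + 1)

/-- Path-restricted (unlimited distance) maximum vertices saved. -/
noncomputable def PRMVS (G : SimpleGraph V) (F : Finset V) (b : ℕ) : ℕ :=
  sSup {k | ∃ p : ℕ → Fin b → V, ValidPR G F p ∧
    k = Fintype.card V - (pburnt G F p (Fintype.card V)).card}

/-- Validity for the distance- and path-restricted game. -/
def ValidDPR (G : SimpleGraph V) (F : Finset V) (d : ℕ) {b : ℕ} (p : ℕ → Fin b → V) : Prop :=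
  (∀ t i, p t i ∉ pburnt G F p t) ∧
    ∀ t i, ∃ w : G.Walk (p t i) (p (t + 1) i), w.length ≤ d ∧
      ∀ v ∈ w.support, v ∉ pburnt G F p (t + 1)

/-- Distance- and path-restricted maximum vertices saved. -/
noncomputable def DPRMVS (G : SimpleGraph V) (F : Finset V) (b d : ℕ) : ℕ :=
  sSup {k | ∃ p : ℕ → Fin b → V, ValidDPR G F d p ∧
    k = Fintype.card V - (pburnt G F p (Fintype.card V)).card}

/-- Burnt count in the single-defence game: the firefighter defends a single
vertex `w ≠ s` and the fire then burns everything reachable from `s` avoiding `w`. -/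
noncomputable def sdBurnt (G : SimpleGraph V) (s : V) : ℕ :=
  sInf {k | ∃ w, w ≠ s ∧
    k = (Finset.univ.filter (fun x => ∃ q : G.Walk s x, w ∉ q.support)).card}

end FF

open FF

/-- One-directional edge description of `G''`: the graph `G` together with
`w v - 1` new pendant leaves `L_v` attached to each vertex `v`. -/
def wLink {V : Type*} (G : SimpleGraph V) (w : V → ℕ) :
    (V ⊕ Σ v : V, Fin (w v - 1)) → (V ⊕ Σ v : V, Fin (w v - 1)) → Prop
  | Sum.inl a, Sum.inl b => G.Adj a b
  | Sum.inl a, Sum.inr x => a = x.1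
  | _, _ => False

/-- The graph `G''` obtained from `G` by attaching `w v - 1` leaves to each vertex `v`. -/
def wGraph {V : Type*} (G : SimpleGraph V) (w : V → ℕ) :
    SimpleGraph (V ⊕ Σ v : V, Fin (w v - 1)) where
  Adj x y := wLink G w x y ∨ wLink G w y x
  symm := ⟨fun x y h => h.symm⟩
  loopless := ⟨by
    rintro (a | x) h
    · exact G.irrefl (by rcases h with h | h <;> exact h)
    · rcases h with h | h <;> exact h⟩

/-- The fire set `F'' = ⋃_{v ∈ F} (L_v ∪ {v})`. -/
noncomputable def wFire {V : Type*} [Fintype V] [DecidableEq V]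
    (F : Finset V) (w : V → ℕ) : Finset (V ⊕ Σ v : V, Fin (w v - 1)) :=
  Finset.univ.filter (fun x =>
    match x with
    | Sum.inl a => a ∈ F
    | Sum.inr y => y.1 ∈ F)

/-! The two games are compared through the projection `G'' → G` sending each leaf of `L_v` to
`v`, whose fibres have `w_v` elements. A strategy on `G`, played on the copy of `G` inside `G''`,
burns at most the fibres of the vertices it burns in `G`. Conversely, projecting a strategy on
`G''` yields a valid one on `G`: a firefighter standing on a leaf either entered it through its
base, which is then unburnt, or was already there and kept the base safe. Every vertex burnt by
the projected strategy is burnt in `G''`, and so is its whole fibre one step later, since a leaf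
that was ever occupied has a base that never burns. -/

namespace FF

variable {V W : Type*} [DecidableEq V] [DecidableEq W] {b : ℕ} {p : ℕ → Fin b → V}

lemma mem_posDef {t : ℕ} {v : V} : v ∈ posDef p t ↔ ∃ τ ≤ t, ∃ i, p τ i = v := by
  simp [posDef]

lemma posDef_mono : Monotone (posDef p) := fun _ _ hst _ hv =>
  let ⟨τ, hτ, i, hi⟩ := mem_posDef.1 hv
  mem_posDef.2 ⟨τ, hτ.trans hst, i, hi⟩

lemma mem_posDef_comp {f : V → W} {t : ℕ} {v : V} (hv : v ∈ posDef p t) :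
    f v ∈ posDef (fun t i => f (p t i)) t :=
  let ⟨τ, hτ, i, hi⟩ := mem_posDef.1 hv
  mem_posDef.2 ⟨τ, hτ, i, congrArg f hi⟩

variable [Fintype V] [Fintype W] {G : SimpleGraph V} {F : Finset V}

lemma mem_spread {D B : Finset V} {v : V} :
    v ∈ spread G D B ↔ v ∈ B ∨ v ∉ D ∧ ∃ u ∈ B, G.Adj u v := by
  simp [spread]

lemma pburnt_succ (t : ℕ) : pburnt G F p (t + 1) = spread G (posDef p t) (pburnt G F p t) :=
  rfl

lemma pburnt_mono : Monotone (pburnt G F p) :=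
  monotone_nat_of_le_succ fun _ => Finset.subset_union_left

lemma pburnt_succ_succ_eq {t : ℕ} (h : pburnt G F p (t + 1) = pburnt G F p t) :
    pburnt G F p (t + 2) = pburnt G F p (t + 1) := by
  refine Finset.Subset.antisymm ?_ (pburnt_mono (Nat.le_succ _))
  intro v hv
  rw [pburnt_succ, mem_spread, h] at hv
  rw [pburnt_succ, mem_spread]
  exact hv.imp_right fun ⟨hvD, hu⟩ => ⟨fun hv' => hvD (posDef_mono (Nat.le_succ t) hv'), hu⟩

lemma pburnt_eq_of_succ_eq {s : ℕ} (h : pburnt G F p (s + 1) = pburnt G F p s) {t : ℕ}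
    (hst : s ≤ t) : pburnt G F p t = pburnt G F p s := by
  have hstall : ∀ t ≥ s, pburnt G F p (t + 1) = pburnt G F p t :=
    fun t hst => Nat.le_induction h (fun _ _ ih => pburnt_succ_succ_eq ih) t hst
  induction t, hst using Nat.le_induction with
  | base => rfl
  | succ t hst ih => rw [hstall t hst, ih]

/-- Until the fire stops, each step burns a new vertex. -/
lemma pburnt_eq_pburnt_card {t : ℕ} (ht : Fintype.card V ≤ t) :
    pburnt G F p t = pburnt G F p (Fintype.card V) := by
  suffices hstop : ∃ s ≤ Fintype.card V, pburnt G F p (s + 1) = pburnt G F p s by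
    obtain ⟨s, hs, h⟩ := hstop
    rw [pburnt_eq_of_succ_eq h (hs.trans ht), pburnt_eq_of_succ_eq h hs]
  by_contra! hgrow
  have hcard : ∀ s ≤ Fintype.card V + 1, s ≤ (pburnt G F p s).card := by
    intro s hs
    induction s with
    | zero => exact Nat.zero_le _
    | succ s ih =>
      have hlt : (pburnt G F p s).card < (pburnt G F p (s + 1)).card :=
        Finset.card_lt_card <| Finset.ssubset_iff_subset_ne.2
          ⟨pburnt_mono (Nat.le_succ s), (hgrow s (by omega)).symm⟩
      have := ih (by omega)
      omega
  have := (hcard _ le_rfl).trans (Finset.card_le_univ _)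
  omega

lemma notMem_pburnt_succ_of_mem_posDef {t : ℕ} {v : V} (hD : v ∈ posDef p t)
    (hv : v ∉ pburnt G F p t) : v ∉ pburnt G F p (t + 1) := by
  rw [pburnt_succ, mem_spread]
  rintro (h | ⟨hD', -⟩)
  exacts [hv h, hD' hD]

lemma notMem_pburnt_of_mem_posDef {s : ℕ} {v : V} (hD : v ∈ posDef p s)
    (hv : v ∉ pburnt G F p s) (t : ℕ) : v ∉ pburnt G F p t := by
  rcases le_total t s with hts | hst
  · exact fun h => hv (pburnt_mono hts h)
  induction t, hst using Nat.le_induction with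
  | base => exact hv
  | succ t hst ih => exact notMem_pburnt_succ_of_mem_posDef (posDef_mono hst hD) ih

lemma map_mem_pburnt {H : SimpleGraph W} {F' : Finset W} {c : ℕ} {q : ℕ → Fin c → W}
    (f : G →g H) (hF : ∀ v ∈ F, f v ∈ F')
    (hD : ∀ t v, f v ∈ posDef q t → v ∈ posDef p t) :
    ∀ t, ∀ v ∈ pburnt G F p t, f v ∈ pburnt H F' q t
  | 0 => hF
  | t + 1 => by
    intro v hv
    rw [pburnt_succ, mem_spread] at hv ⊢
    rcases hv with hv | ⟨hvD, u, hu, huv⟩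
    · exact .inl (map_mem_pburnt f hF hD t v hv)
    · exact .inr ⟨fun h => hvD (hD t v h), f u, map_mem_pburnt f hF hD t u hu, f.map_adj huv⟩

end FF

namespace SimpleGraph.Walk

variable {V W : Type*} {G : SimpleGraph V} {H : SimpleGraph W}

lemma exists_map_of_adj {f : W → V}
    (hf : ∀ x y, H.Adj x y → f x = f y ∨ G.Adj (f x) (f y)) :
    ∀ {x y : W} (wk : H.Walk x y), ∃ wk' : G.Walk (f x) (f y),
      wk'.length ≤ wk.length ∧ ∀ v ∈ wk'.support, ∃ u ∈ wk.support, f u = v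
  | _, _, nil => ⟨nil, le_rfl, by simp⟩
  | _, _, cons (v := z) h wk => by
    obtain ⟨wk', hlen, hsupp⟩ := exists_map_of_adj hf wk
    have hsupp' : ∀ v ∈ wk'.support, ∃ u ∈ (cons h wk).support, f u = v := fun v hv =>
      let ⟨u, hu, huv⟩ := hsupp v hv
      ⟨u, List.mem_cons_of_mem _ hu, huv⟩
    rcases hf _ _ h with heq | hadj
    · refine ⟨wk'.copy heq.symm rfl, ?_, by simpa using hsupp'⟩
      simp only [length_copy, length_cons]
      omega
    · refine ⟨cons hadj wk', by simpa using hlen, ?_⟩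
      intro v hv
      rw [support_cons, List.mem_cons] at hv
      rcases hv with rfl | hv
      · exact ⟨_, List.mem_cons_self, rfl⟩
      · exact hsupp' v hv

end SimpleGraph.Walk

section LeafGraph

open FF

variable {V : Type*} {G : SimpleGraph V} {w : V → ℕ}

def wproj (w : V → ℕ) : V ⊕ (Σ v : V, Fin (w v - 1)) → V := Sum.elim id Sigma.fst

def wGraphInl (G : SimpleGraph V) (w : V → ℕ) : G →g wGraph G w :=
  ⟨Sum.inl, Or.inl⟩

lemma wGraph_adj_inl {a c : V} : (wGraph G w).Adj (Sum.inl a) (Sum.inl c) ↔ G.Adj a c :=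
  ⟨fun h => h.elim id G.adj_symm, Or.inl⟩

lemma wGraph_adj_inr {x : Σ v : V, Fin (w v - 1)} {y : V ⊕ Σ v : V, Fin (w v - 1)}
    (h : (wGraph G w).Adj y (Sum.inr x)) : y = Sum.inl x.1 := by
  rcases y with a | y <;> rcases h with h | h
  exacts [congrArg Sum.inl h, h.elim, h.elim, h.elim]

lemma wGraph_adj_inl_inr (x : Σ v : V, Fin (w v - 1)) :
    (wGraph G w).Adj (Sum.inl x.1) (Sum.inr x) :=
  Or.inl rfl

lemma wGraph_adj_wproj {y z : V ⊕ Σ v : V, Fin (w v - 1)} (h : (wGraph G w).Adj y z) :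
    wproj w y = wproj w z ∨ G.Adj (wproj w y) (wproj w z) := by
  rcases y with a | x <;> rcases z with c | x' <;> rcases h with h | h
  exacts [.inr h, .inr (G.adj_symm h), .inl h, h.elim, h.elim, .inl h.symm, h.elim, h.elim]

/-- A leaf's only neighbour is its base. -/
lemma inl_wproj_mem_support {y z : V ⊕ Σ v : V, Fin (w v - 1)} (wk : (wGraph G w).Walk y z)
    (hwk : ¬wk.Nil) {u : V ⊕ Σ v : V, Fin (w v - 1)} (hu : u ∈ wk.support) :
    Sum.inl (wproj w u) ∈ wk.support := by
  rcases u with a | x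
  · exact hu
  obtain ⟨e, he, hxe⟩ := (SimpleGraph.Walk.mem_support_iff_exists_mem_edges_of_not_nil hwk).1 hu
  obtain ⟨u, rfl⟩ := Sym2.mem_iff_exists.1 hxe
  change Sum.inl x.1 ∈ wk.support
  rw [← wGraph_adj_inr (wk.adj_of_mem_edges he).symm]
  exact wk.snd_mem_support_of_mem_edges he

variable [Fintype V]

lemma card_univ_le_card_wGraph : Fintype.card V ≤ Fintype.card (V ⊕ Σ v : V, Fin (w v - 1)) :=
  Fintype.card_le_of_injective _ Sum.inl_injective

variable [DecidableEq V]

/-- `⋃_{v ∈ S} ({v} ∪ L_v)`. -/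
noncomputable def wFiber (w : V → ℕ) (S : Finset V) : Finset (V ⊕ Σ v : V, Fin (w v - 1)) :=
  Finset.univ.filter fun y => wproj w y ∈ S

lemma mem_wFiber {S : Finset V} {y : V ⊕ Σ v : V, Fin (w v - 1)} :
    y ∈ wFiber w S ↔ wproj w y ∈ S := by
  simp [wFiber]

lemma wFiber_mono {S T : Finset V} (h : S ⊆ T) : wFiber w S ⊆ wFiber w T :=
  fun _ hy => mem_wFiber.2 (h (mem_wFiber.1 hy))

lemma wFire_eq_wFiber (F : Finset V) : wFire F w = wFiber w F := by
  ext (a | x) <;> simp [wFire, mem_wFiber, wproj]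

lemma card_wFiber (hw : ∀ v, 1 ≤ w v) (S : Finset V) :
    (wFiber w S).card = ∑ v ∈ S, w v := by
  rw [wFiber, Finset.card_filter, Fintype.sum_sum_type, Fintype.sum_sigma,
    ← Finset.sum_add_distrib, ← Finset.sum_ite_mem_eq S]
  refine Finset.sum_congr rfl fun v _ => ?_
  by_cases hv : v ∈ S <;> simp [wproj, hv]
  have := hw v
  omega

lemma univ_sdiff_wFiber (S : Finset V) :
    Finset.univ \ wFiber w S = wFiber w (Finset.univ \ S) := by
  ext y
  simp [mem_wFiber]

variable {F : Finset V} {b d : ℕ}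

lemma pburnt_inl_subset_wFiber (p : ℕ → Fin b → V) : ∀ t,
    pburnt (wGraph G w) (wFire F w) (fun t i => Sum.inl (p t i)) t ⊆ wFiber w (pburnt G F p t)
  | 0 => (wFire_eq_wFiber F).subset
  | t + 1 => by
    intro y hy
    rw [pburnt_succ, mem_spread] at hy
    rcases hy with hy | ⟨hyD, u, hu, huy⟩
    · exact wFiber_mono (pburnt_mono t.le_succ) (pburnt_inl_subset_wFiber p t hy)
    have hu' := mem_wFiber.1 (pburnt_inl_subset_wFiber p t hu)
    rw [mem_wFiber, pburnt_succ, mem_spread]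
    rcases y with c | x
    · rcases u with a | x
      · exact .inr ⟨fun hc => hyD (mem_posDef_comp hc), a, hu', wGraph_adj_inl.1 huy⟩
      · obtain rfl : c = x.1 := Sum.inl_injective (wGraph_adj_inr huy.symm)
        exact .inl hu'
    · rw [wGraph_adj_inr huy] at hu'
      exact .inl hu'

lemma validDPR_inl {p : ℕ → Fin b → V} (hp : ValidDPR G F d p) :
    ValidDPR (wGraph G w) (wFire F w) d (fun t i => Sum.inl (p t i)) := by
  refine ⟨fun t i h => hp.1 t i (mem_wFiber.1 (pburnt_inl_subset_wFiber p t h)), fun t i => ?_⟩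
  obtain ⟨wk, hlen, hsupp⟩ := hp.2 t i
  refine ⟨wk.map (wGraphInl G w), (wk.length_map _).trans_le hlen, fun v hv => ?_⟩
  have hv' : v ∈ (wk.map (wGraphInl G w)).support := hv
  rw [SimpleGraph.Walk.support_map, List.mem_map] at hv'
  obtain ⟨a, ha, rfl⟩ := hv'
  exact fun h => hsupp a ha (mem_wFiber.1 (pburnt_inl_subset_wFiber p _ h))

lemma sum_saved_le_card_saved_inl (hw : ∀ v, 1 ≤ w v) (p : ℕ → Fin b → V) :
    ∑ v ∈ Finset.univ \ pburnt G F p (Fintype.card V), w v ≤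
      (Finset.univ \ pburnt (wGraph G w) (wFire F w) (fun t i => Sum.inl (p t i))
        (Fintype.card (V ⊕ Σ v : V, Fin (w v - 1)))).card := by
  rw [← card_wFiber hw, ← univ_sdiff_wFiber]
  refine Finset.card_le_card (Finset.sdiff_subset_sdiff le_rfl ?_)
  rw [← pburnt_eq_pburnt_card (p := p) card_univ_le_card_wGraph]
  exact pburnt_inl_subset_wFiber p _

variable {q : ℕ → Fin b → V ⊕ Σ v : V, Fin (w v - 1)}

lemma inl_mem_pburnt_of_mem_pburnt_wproj :
    ∀ t, ∀ v ∈ pburnt G F (fun t i => wproj w (q t i)) t,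
      Sum.inl v ∈ pburnt (wGraph G w) (wFire F w) q t :=
  map_mem_pburnt (wGraphInl G w) (fun _ hv => wFire_eq_wFiber F ▸ mem_wFiber.2 hv)
    (fun _ _ h => mem_posDef_comp h)

/-- A firefighter reaches a leaf either through its base, which is then unburnt, or by standing
still on it. -/
lemma wproj_notMem_pburnt (hq : ValidDPR (wGraph G w) (wFire F w) d q) :
    ∀ t i, wproj w (q t i) ∉ pburnt G F (fun t i => wproj w (q t i)) t
  | 0, i => fun h => hq.1 0 i (wFire_eq_wFiber F ▸ mem_wFiber.2 h)
  | t + 1, i => by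
    obtain ⟨wk, -, hsupp⟩ := hq.2 t i
    by_cases hnil : wk.Nil
    · rw [← hnil.eq]
      exact notMem_pburnt_succ_of_mem_posDef (mem_posDef.2 ⟨t, le_rfl, i, rfl⟩)
        (wproj_notMem_pburnt hq t i)
    · exact fun h => hsupp _ (inl_wproj_mem_support wk hnil wk.end_mem_support)
        (inl_mem_pburnt_of_mem_pburnt_wproj _ _ h)

lemma validDPR_wproj (hq : ValidDPR (wGraph G w) (wFire F w) d q) :
    ValidDPR G F d (fun t i => wproj w (q t i)) := by
  refine ⟨wproj_notMem_pburnt hq, fun t i => ?_⟩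
  obtain ⟨wk, hlen, hsupp⟩ := hq.2 t i
  obtain ⟨wk', hlen', hsupp'⟩ := wk.exists_map_of_adj fun _ _ => wGraph_adj_wproj
  refine ⟨wk', hlen'.trans hlen, fun v hv => ?_⟩
  obtain ⟨u, hu, rfl⟩ := hsupp' v hv
  by_cases hnil : wk.Nil
  · rw [SimpleGraph.Walk.nil_iff_support_eq.1 hnil, List.mem_singleton] at hu
    rw [hu, hnil.eq]
    exact wproj_notMem_pburnt hq (t + 1) i
  · exact fun h => hsupp _ (inl_wproj_mem_support wk hnil hu)
      (inl_mem_pburnt_of_mem_pburnt_wproj _ _ h)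

/-- A leaf over a burnt vertex was never occupied (its base would then be safe forever), so it
catches fire one step after its base. -/
lemma wFiber_pburnt_wproj_subset (hq : ValidDPR (wGraph G w) (wFire F w) d q) (t : ℕ) :
    wFiber w (pburnt G F (fun t i => wproj w (q t i)) t) ⊆
      pburnt (wGraph G w) (wFire F w) q (t + 1) := by
  intro y hy
  have hv := mem_wFiber.1 hy
  rcases y with a | x
  · exact pburnt_mono t.le_succ (inl_mem_pburnt_of_mem_pburnt_wproj t a hv)
  rw [pburnt_succ, mem_spread]
  refine .inr ⟨fun hD => ?_, _, inl_mem_pburnt_of_mem_pburnt_wproj t x.1 hv,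
    wGraph_adj_inl_inr x⟩
  obtain ⟨τ, -, i, hi⟩ := mem_posDef.1 hD
  have hτ := wproj_notMem_pburnt hq τ i
  rw [hi] at hτ
  exact notMem_pburnt_of_mem_posDef (mem_posDef.2 ⟨τ, le_rfl, i, congrArg (wproj w) hi⟩)
    hτ t hv

lemma card_saved_le_sum_saved_wproj (hw : ∀ v, 1 ≤ w v)
    (hq : ValidDPR (wGraph G w) (wFire F w) d q) :
    (Finset.univ \ pburnt (wGraph G w) (wFire F w) q
        (Fintype.card (V ⊕ Σ v : V, Fin (w v - 1)))).card ≤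
      ∑ v ∈ Finset.univ \ pburnt G F (fun t i => wproj w (q t i)) (Fintype.card V), w v := by
  rw [← card_wFiber hw, ← univ_sdiff_wFiber]
  refine Finset.card_le_card (Finset.sdiff_subset_sdiff le_rfl ?_)
  calc wFiber w (pburnt G F (fun t i => wproj w (q t i)) (Fintype.card V))
      ⊆ pburnt (wGraph G w) (wFire F w) q (Fintype.card V + 1) :=
        wFiber_pburnt_wproj_subset hq _
      _ ⊆ pburnt (wGraph G w) (wFire F w) q (Fintype.card (V ⊕ Σ v : V, Fin (w v - 1)) + 1) :=
        pburnt_mono (Nat.succ_le_succ card_univ_le_card_wGraph)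
      _ = _ := pburnt_eq_pburnt_card (Nat.le_succ _)

end LeafGraph

theorem stmt18 {V : Type*} [Fintype V] [DecidableEq V]
    (G : SimpleGraph V) (F : Finset V) (w : V → ℕ) (hw : ∀ v, 1 ≤ w v)
    (b d k : ℕ) :
    (∃ p : ℕ → Fin b → V, FF.ValidDPR G F d p ∧
        k ≤ ∑ v ∈ Finset.univ \ FF.pburnt G F p (Fintype.card V), w v) ↔
    (∃ q : ℕ → Fin b → (V ⊕ Σ v : V, Fin (w v - 1)),
        FF.ValidDPR (wGraph G w) (wFire F w) d q ∧
        k ≤ (Finset.univ \ FF.pburnt (wGraph G w) (wFire F w) q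
              (Fintype.card (V ⊕ Σ v : V, Fin (w v - 1)))).card) := by
  constructor
  · rintro ⟨p, hp, hk⟩
    exact ⟨_, validDPR_inl hp, hk.trans (sum_saved_le_card_saved_inl hw p)⟩
  · rintro ⟨q, hq, hk⟩
    exact ⟨_, validDPR_wproj hq, hk.trans (card_saved_le_sum_saved_wproj hw hq)⟩
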